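/- Let w be a clique weighting and let G be an n-vertex K_5-free graph, where each edge e has weight w(r_e) for r_e the order of a largest clique of G containing e (so r_e ∈ {2,3,4}). Then w(G) = (2/n²)·∑_{e∈E(G)} w(e) ≤ (1/2)·max{ w(2), (4/3)·w(3), (3/2)·w(4) }. In particular, if w(2) = 1, w(3) ≤ 3/4 and w(4) ≤ 2/3, then w(G) ≤ 1/2; if w(3) ≥ 3/4 and w(3) ≥ (9/8)·w(4) and w(2) ≤ (4/3)·w(3), then w(G) ≤ (2/3)·w(3); and if w(4) ≥ 2/3 and w(3) ≤ (9/8)·w(4) and w(2) ≤ (3/2)·w(4), then w(G) ≤ (3/4)·w(4). -/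

import Mathlib

open Finset
open scoped Classical

/-- The order of a largest clique of `G` containing both `u` and `v`. -/
noncomputable def cliqueOrder {V : Type} [Fintype V] (G : SimpleGraph V) (u v : V) : ℕ :=
  sSup {r : ℕ | ∃ s : Finset V, G.IsNClique r s ∧ u ∈ s ∧ v ∈ s}

/-- `w(G) = (2/n²)·∑_{e ∈ E(G)} w(r_e)`, written as a sum over ordered pairs of
adjacent vertices (each edge is counted twice), divided by `n²`. -/
noncomputable def cliqueWeight {V : Type} [Fintype V] (G : SimpleGraph V) (w : ℕ → ℝ) : ℝ :=
  ((Fintype.card V : ℝ) ^ 2)⁻¹ *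
    ∑ u : V, ∑ v : V, if G.Adj u v then w (cliqueOrder G u v) else 0

/-! By the local Turán inequality, `∑ₑ rₑ / (rₑ - 1) ≤ n² / 2` for every `n`-vertex graph.
It follows by induction after removing a maximum clique `Q` with `ω` vertices: the edges inside
`Q` contribute at most `ω² / 2`; a vertex outside `Q` with `d ≥ 1` neighbours in `Q` lies in a
`(d + 1)`-clique with each of these `d` edges, so it contributes at most `d + 1 ≤ ω`; and the
remaining `n - ω` vertices contribute at most `(n - ω)² / 2`.

In a `K₅`-free graph every `rₑ` lies in `{2, 3, 4}`, and for these values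
`w(r) ≤ (M / 2) · r / (r - 1)`, where `M = max {w(2), (4/3) w(3), (3/2) w(4)}`. -/

/-- The weight `r / (r - 1)` of an edge whose largest clique has order `r`; note that
`turanRatio 0 = turanRatio 1 = 0`. -/
noncomputable def turanRatio (r : ℕ) : ℝ := r / (r - 1)

lemma turanRatio_nonneg {r : ℕ} (hr : 1 ≤ r) : 0 ≤ turanRatio r :=
  div_nonneg r.cast_nonneg (sub_nonneg.2 (by exact_mod_cast hr))

lemma turanRatio_le_turanRatio {a b : ℕ} (ha : 2 ≤ a) (hab : a ≤ b) :
    turanRatio b ≤ turanRatio a := by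
  have ha' : (2 : ℝ) ≤ a := by exact_mod_cast ha
  have hab' : (a : ℝ) ≤ b := by exact_mod_cast hab
  rw [turanRatio, turanRatio, div_le_div_iff₀ (by linarith) (by linarith)]
  nlinarith

lemma sub_one_mul_turanRatio_le (k : ℕ) : ((k : ℝ) - 1) * turanRatio k ≤ k := by
  rcases eq_or_ne k 1 with rfl | hk
  · simp [turanRatio]
  · rw [turanRatio, mul_div_cancel₀ _ (sub_ne_zero.2 (by exact_mod_cast hk))]

section CliqueOrder

variable {V : Type} [Fintype V] {G : SimpleGraph V} {u v : V}

lemma SimpleGraph.IsClique.card_le_cliqueOrder {s : Finset V} (hs : G.IsClique (s : Set V))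
    (hu : u ∈ s) (hv : v ∈ s) : #s ≤ cliqueOrder G u v :=
  le_csSup ⟨Fintype.card V, by rintro r ⟨t, ht, -, -⟩; exact ht.card_eq ▸ t.card_le_univ⟩
    ⟨s, ⟨hs, rfl⟩, hu, hv⟩

lemma two_le_cliqueOrder (h : G.Adj u v) : 2 ≤ cliqueOrder G u v := by
  have hpair : G.IsClique (({u, v} : Finset V) : Set V) := by
    rw [coe_pair]
    exact SimpleGraph.isClique_pair.2 fun _ => h
  simpa [card_pair_eq_two_iff.2 h.ne] using hpair.card_le_cliqueOrder (by simp) (by simp)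

lemma cliqueOrder_le_of_cliqueFree {k : ℕ} (hG : G.CliqueFree (k + 1)) (u v : V) :
    cliqueOrder G u v ≤ k := by
  refine csSup_le' ?_
  rintro r ⟨s, hs, -, -⟩
  by_contra! hr
  exact hG.mono hr s hs

lemma cliqueOrder_comm (u v : V) : cliqueOrder G u v = cliqueOrder G v u := by
  simp only [cliqueOrder, and_comm (a := u ∈ _)]

end CliqueOrder

lemma exists_max_clique_subset {V : Type*} (G : SimpleGraph V) (s : Finset V) :
    ∃ Q ⊆ s, G.IsClique (Q : Set V) ∧ ∀ t ⊆ s, G.IsClique (t : Set V) → #t ≤ #Q := by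
  obtain ⟨Q, hQ, hmax⟩ := exists_max_image
    (s.powerset.filter fun t : Finset V => G.IsClique (t : Set V)) (fun t : Finset V => #t)
    ⟨∅, by simp⟩
  simp only [mem_filter, mem_powerset] at hQ hmax
  exact ⟨Q, hQ.1, hQ.2, fun t hts ht => hmax t ⟨hts, ht⟩⟩

section LocalTuran

variable {V : Type} [Fintype V] {G : SimpleGraph V} {u v : V}

/-- Summed over ordered pairs, so each edge counts twice and the local Turán bound reads `n²`. -/
noncomputable def turanWeight (G : SimpleGraph V) (u v : V) : ℝ :=
  if G.Adj u v then turanRatio (cliqueOrder G u v) else 0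

lemma turanWeight_comm : turanWeight G u v = turanWeight G v u := by
  rw [turanWeight, turanWeight, G.adj_comm, cliqueOrder_comm]

lemma turanWeight_nonneg : 0 ≤ turanWeight G u v := by
  unfold turanWeight
  split_ifs with h
  exacts [turanRatio_nonneg (one_le_two.trans (two_le_cliqueOrder h)), le_rfl]

lemma turanWeight_le_turanRatio_card {s : Finset V} (hs : G.IsClique (s : Set V))
    (hu : u ∈ s) (hv : v ∈ s) : turanWeight G u v ≤ turanRatio #s := by
  unfold turanWeight
  split_ifs with h
  · have h2 : 2 ≤ #s := by
      simpa [card_pair_eq_two_iff.2 h.ne] using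
        card_le_card (insert_subset hu (singleton_subset_iff.2 hv))
    exact turanRatio_le_turanRatio h2 (hs.card_le_cliqueOrder hu hv)
  · exact turanRatio_nonneg (card_pos.2 ⟨u, hu⟩)

lemma sum_turanWeight_le_card_of_isClique {K : Finset V} (hK : G.IsClique (K : Set V))
    (hu : u ∈ K) : ∑ v ∈ K, turanWeight G u v ≤ #K :=
  calc ∑ v ∈ K, turanWeight G u v = ∑ v ∈ K.erase u, turanWeight G u v :=
        (sum_erase K (by simp [turanWeight])).symm
    _ ≤ ∑ _v ∈ K.erase u, turanRatio #K :=
        sum_le_sum fun _ hv => turanWeight_le_turanRatio_card hK hu (mem_of_mem_erase hv)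
    _ = ((#K : ℝ) - 1) * turanRatio #K := by
        rw [sum_const, card_erase_of_mem hu, nsmul_eq_mul, Nat.cast_pred (card_pos.2 ⟨u, hu⟩)]
    _ ≤ #K := sub_one_mul_turanRatio_le _

/-- Only the neighbours of `u` in `Q` count, and together with `u` they form a clique inside `s`. -/
lemma sum_turanWeight_le_card_of_max_clique {s Q : Finset V} (hQs : Q ⊆ s)
    (hQ : G.IsClique (Q : Set V)) (hmax : ∀ t ⊆ s, G.IsClique (t : Set V) → #t ≤ #Q)
    (hu : u ∈ s) : ∑ v ∈ Q, turanWeight G u v ≤ #Q := by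
  set K := insert u (Q.filter (G.Adj u))
  have hK : G.IsClique (K : Set V) := by
    rw [coe_insert]
    exact (hQ.subset (coe_subset.2 (filter_subset _ _))).insert fun v hv _ => (mem_filter.1 hv).2
  calc ∑ v ∈ Q, turanWeight G u v = ∑ v ∈ Q.filter (G.Adj u), turanWeight G u v :=
        (sum_filter_of_ne fun v _ h => by_contra fun hnadj => h (if_neg hnadj)).symm
    _ ≤ ∑ v ∈ K, turanWeight G u v :=
        sum_le_sum_of_subset_of_nonneg (subset_insert _ _) fun _ _ _ => turanWeight_nonneg
    _ ≤ #K := sum_turanWeight_le_card_of_isClique hK (mem_insert_self _ _)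
    _ ≤ #Q := by exact_mod_cast hmax K (insert_subset hu ((filter_subset _ _).trans hQs)) hK

/-- Clique orders are taken in `G` rather than in the subgraph induced on `s`, which only makes
the summands smaller and lets the induction run over subsets of a fixed vertex type. -/
theorem sum_turanWeight_le_card_sq (G : SimpleGraph V) (s : Finset V) :
    ∑ u ∈ s, ∑ v ∈ s, turanWeight G u v ≤ (#s : ℝ) ^ 2 := by
  induction s using Finset.strongInduction with
  | H s ih =>
  rcases s.eq_empty_or_nonempty with rfl | ⟨a, ha⟩
  · simp
  obtain ⟨Q, hQs, hQ, hmax⟩ := exists_max_clique_subset G s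
  have hQpos : 0 < #Q := hmax {a} (singleton_subset_iff.2 ha) (by simp)
  set R := s \ Q
  have hR : (#R : ℝ) = #s - #Q := by
    rw [card_sdiff_of_subset hQs, Nat.cast_sub (card_le_card hQs)]
  have hsplit (f : V → ℝ) : ∑ v ∈ s, f v = ∑ v ∈ Q, f v + ∑ v ∈ R, f v := by
    rw [← sum_sdiff hQs, add_comm]
  have hQcol : ∑ u ∈ s, ∑ v ∈ Q, turanWeight G u v ≤ #s * #Q := by
    simpa using sum_le_sum fun u hu => sum_turanWeight_le_card_of_max_clique hQs hQ hmax hu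
  have hQR : ∑ u ∈ Q, ∑ v ∈ R, turanWeight G u v ≤ #R * #Q := by
    rw [sum_comm]
    refine (sum_congr rfl fun v _ => sum_congr rfl fun u _ => turanWeight_comm).trans_le ?_
    simpa using
      sum_le_sum fun u hu => sum_turanWeight_le_card_of_max_clique hQs hQ hmax (sdiff_subset hu)
  have hRR := ih R (sdiff_ssubset hQs (card_pos.1 hQpos))
  calc ∑ u ∈ s, ∑ v ∈ s, turanWeight G u v
        = ∑ u ∈ s, ∑ v ∈ Q, turanWeight G u v +
          (∑ u ∈ Q, ∑ v ∈ R, turanWeight G u v + ∑ u ∈ R, ∑ v ∈ R, turanWeight G u v) := by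
        rw [← hsplit, ← sum_add_distrib]
        exact sum_congr rfl fun u _ => hsplit _
    _ ≤ #s * #Q + (#R * #Q + (#R : ℝ) ^ 2) := by gcongr
    _ = (#s : ℝ) ^ 2 := by rw [hR]; ring

end LocalTuran

lemma cliqueWeight_le {V : Type} [Fintype V] (G : SimpleGraph V) (w : ℕ → ℝ) {c : ℝ}
    (hc : 0 ≤ c)
    (hw : ∀ u v, G.Adj u v → w (cliqueOrder G u v) ≤ c * turanRatio (cliqueOrder G u v)) :
    cliqueWeight G w ≤ c := by
  have hsum : (∑ u : V, ∑ v : V, if G.Adj u v then w (cliqueOrder G u v) else 0) ≤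
      c * (Fintype.card V : ℝ) ^ 2 :=
    calc _ ≤ ∑ u : V, ∑ v : V, c * turanWeight G u v := by
          gcongr with u _ v _
          unfold turanWeight
          split_ifs with h
          exacts [hw u v h, (mul_zero c).symm.le]
      _ = c * ∑ u : V, ∑ v : V, turanWeight G u v := by simp only [mul_sum]
      _ ≤ c * (Fintype.card V : ℝ) ^ 2 := by
          gcongr
          simpa using sum_turanWeight_le_card_sq G univ
  rw [cliqueWeight]
  rcases eq_or_ne (Fintype.card V) 0 with h0 | h0
  · simp [h0, hc]
  · rw [inv_mul_le_iff₀ (by positivity)]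
    linarith

/-- For a clique weighting `w` and a `K₅`-free graph `G`,
`w(G) ≤ (1/2)·max{w(2), (4/3)w(3), (3/2)w(4)}`, together with the three particular
consequences for the regions where `T(n,2)`, `T(n,3)`, `T(n,4)` are extremal. -/
theorem cliqueWeight_K5free (w : ℕ → ℝ) (hw : ∀ r, 2 ≤ r → 0 ≤ w r ∧ w r ≤ 1)
    (n : ℕ) (G : SimpleGraph (Fin n)) (hG : G.CliqueFree 5) :
    cliqueWeight G w ≤ 1 / 2 * max (w 2) (max (4 / 3 * w 3) (3 / 2 * w 4)) ∧
    ((w 2 = 1 ∧ w 3 ≤ 3 / 4 ∧ w 4 ≤ 2 / 3) → cliqueWeight G w ≤ 1 / 2) ∧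
    ((3 / 4 ≤ w 3 ∧ 9 / 8 * w 4 ≤ w 3 ∧ w 2 ≤ 4 / 3 * w 3) →
      cliqueWeight G w ≤ 2 / 3 * w 3) ∧
    ((2 / 3 ≤ w 4 ∧ w 3 ≤ 9 / 8 * w 4 ∧ w 2 ≤ 3 / 2 * w 4) →
      cliqueWeight G w ≤ 3 / 4 * w 4) := by
  set M := max (w 2) (max (4 / 3 * w 3) (3 / 2 * w 4))
  have hM : w 2 ≤ M ∧ 4 / 3 * w 3 ≤ M ∧ 3 / 2 * w 4 ≤ M := by simp [M]
  have hmain : cliqueWeight G w ≤ 1 / 2 * M := by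
    refine cliqueWeight_le G w (by linarith [(hw 2 le_rfl).1]) fun u v huv => ?_
    have h2 := two_le_cliqueOrder huv
    have h4 := cliqueOrder_le_of_cliqueFree hG u v
    interval_cases cliqueOrder G u v <;> norm_num [turanRatio] <;> linarith
  refine ⟨hmain, ?_, ?_, ?_⟩ <;> rintro ⟨h₁, h₂, h₃⟩
  · have : M ≤ 1 := max_le (by linarith) (max_le (by linarith) (by linarith))
    linarith
  · have : M ≤ 4 / 3 * w 3 := max_le (by linarith) (max_le le_rfl (by linarith))
    linarith
  · have : M ≤ 3 / 2 * w 4 := max_le (by linarith) (max_le (by linarith) le_rfl)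
    linarith
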